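/- arXiv:1811.04618 — 2 statements merged into one kernel-verified Lean document; each statement's English description precedes it below -/
import Mathlib

section
/- Suppose G is a topological group with the invariant Steinhaus property for exponent k (i.e., for every symmetric, conjugation-invariant, countably syndetic subset W ⊆ G, the identity lies in the interior of W^k), and suppose every nonempty conjugation-invariant symmetric subset needed arises from a homomorphism preimage. Then every group homomorphism from G to a separable SIN topological group is continuous. -/
open scoped Pointwise

/-!
Given a neighbourhood `U` of `1` in `H`, the SIN property gives an open conjugation-invariant
neighbourhood `V` of `1` with `(V⁻¹ * V) ^ k ⊆ U`. The set `W = φ ⁻¹' (V⁻¹ * V)` is symmetric and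
conjugation-invariant. It is countably syndetic: `φ t, φ g ∈ d • V` forces `t⁻¹ * g ∈ W`, and the
translates `d • V` over a countable dense set of `d ∈ H` cover `H`. The Steinhaus property puts `1`
in the interior of `W ^ k ⊆ φ ⁻¹' U`, so `φ` is continuous at `1`, hence everywhere.
-/

/-- `H` is SIN: the identity has a neighborhood basis of conjugation-invariant open sets. -/
def IsSIN (H : Type*) [Group H] [TopologicalSpace H] : Prop :=
  ∀ U ∈ nhds (1 : H), ∃ V ∈ nhds (1 : H),
    IsOpen V ∧ V ⊆ U ∧ ∀ g : H, (fun x => g * x * g⁻¹) '' V = V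

open Set Topology

theorem exists_mem_nhds_one_pow_subset {M : Type*} [Monoid M] [TopologicalSpace M]
    [ContinuousMul M] (n : ℕ) {U : Set M} (hU : U ∈ 𝓝 (1 : M)) :
    ∃ V ∈ 𝓝 (1 : M), V ^ n ⊆ U := by
  induction n generalizing U with
  | zero => exact ⟨U, hU, by simpa [Set.one_subset] using mem_of_mem_nhds hU⟩
  | succ n ih =>
    obtain ⟨V₁, hV₁o, hV₁1, hV₁U⟩ := exists_open_nhds_one_mul_subset hU
    obtain ⟨V₂, hV₂, hV₂V₁⟩ := ih (hV₁o.mem_nhds hV₁1)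
    refine ⟨V₁ ∩ V₂, Filter.inter_mem (hV₁o.mem_nhds hV₁1) hV₂, ?_⟩
    calc (V₁ ∩ V₂) ^ (n + 1) = (V₁ ∩ V₂) ^ n * (V₁ ∩ V₂) := pow_succ _ _
      _ ⊆ V₁ * V₁ := mul_subset_mul
          ((pow_subset_pow_left inter_subset_right).trans hV₂V₁) inter_subset_left
      _ ⊆ U := hV₁U

section ConjInvariant

variable {G H : Type*} [Group G] [Group H]

def IsConjInvariant (S : Set G) : Prop :=
  ∀ g : G, ∀ x ∈ S, g * x * g⁻¹ ∈ S

theorem isConjInvariant_iff_conj_image_eq {S : Set G} :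
    IsConjInvariant S ↔ ∀ g : G, (fun x => g * x * g⁻¹) '' S = S := by
  refine ⟨fun h g => Subset.antisymm ?_ fun x hx => ?_, fun h g x hx => ?_⟩
  · rintro _ ⟨x, hx, rfl⟩
    exact h g x hx
  · exact ⟨g⁻¹ * x * g, by simpa using h g⁻¹ x hx, by group⟩
  · exact h g ▸ mem_image_of_mem _ hx

theorem IsConjInvariant.inv {S : Set G} (hS : IsConjInvariant S) : IsConjInvariant S⁻¹ :=
  fun g x hx => by simpa [mul_assoc] using hS g x⁻¹ hx

theorem IsConjInvariant.mul {S T : Set G} (hS : IsConjInvariant S) (hT : IsConjInvariant T) :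
    IsConjInvariant (S * T) := by
  rintro g _ ⟨x, hx, y, hy, rfl⟩
  exact ⟨_, hS g x hx, _, hT g y hy, by group⟩

theorem IsConjInvariant.preimage {S : Set H} (hS : IsConjInvariant S) (φ : G →* H) :
    IsConjInvariant (φ ⁻¹' S) :=
  fun g x hx => by simpa using hS (φ g) (φ x) hx

end ConjInvariant

theorem inv_preimage_inv_mul_self {G H : Type*} [Group G] [Group H] (φ : G →* H) (V : Set H) :
    (φ ⁻¹' (V⁻¹ * V))⁻¹ = φ ⁻¹' (V⁻¹ * V) := by
  ext x
  rw [mem_inv, mem_preimage, mem_preimage, map_inv, ← mem_inv, mul_inv_rev, inv_inv]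

theorem exists_countable_mul_preimage_inv_mul_eq_univ {G H : Type*} [Group G] [Group H]
    [TopologicalSpace H] [IsTopologicalGroup H] [TopologicalSpace.SeparableSpace H]
    (φ : G →* H) {V : Set H} (hV : IsOpen V) (h1 : (1 : H) ∈ V) :
    ∃ T : Set G, T.Countable ∧ T * φ ⁻¹' (V⁻¹ * V) = univ := by
  obtain ⟨D, hDc, hDd⟩ := TopologicalSpace.exists_countable_dense H
  have hchoice : ∀ d : H, ∃ t : G, ∀ g : G, d⁻¹ * φ g ∈ V → d⁻¹ * φ t ∈ V := by
    intro d
    by_cases h : ∃ g, d⁻¹ * φ g ∈ V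
    · obtain ⟨t, ht⟩ := h
      exact ⟨t, fun _ _ => ht⟩
    · exact ⟨1, fun g hg => (h ⟨g, hg⟩).elim⟩
  choose t ht using hchoice
  refine ⟨t '' D, hDc.image t, eq_univ_of_forall fun g => ?_⟩
  have hopen : IsOpen {d : H | d⁻¹ * φ g ∈ V} := hV.preimage (by fun_prop)
  obtain ⟨d, hdD, hd⟩ := hDd.exists_mem_open hopen ⟨φ g, by simpa using h1⟩
  have hφ : φ ((t d)⁻¹ * g) = (d⁻¹ * φ (t d))⁻¹ * (d⁻¹ * φ g) := by
    simp only [map_mul, map_inv]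
    group
  exact ⟨t d, mem_image_of_mem t hdD, (t d)⁻¹ * g,
    ⟨_, inv_mem_inv.2 (ht d g hd), _, hd, hφ.symm⟩, mul_inv_cancel_left _ _⟩

theorem invariant_steinhaus_implies_IAC {G : Type u} [Group G] [TopologicalSpace G]
    [IsTopologicalGroup G] (k : ℕ)
    (hSt : ∀ W : Set G, W⁻¹ = W → (∀ g : G, (fun x => g * x * g⁻¹) '' W = W) →
      (∃ T : Set G, T.Countable ∧ T * W = Set.univ) → (1 : G) ∈ interior (W ^ k)) :
    ∀ (H : Type u) [Group H] [TopologicalSpace H] [IsTopologicalGroup H]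
      [TopologicalSpace.SeparableSpace H], IsSIN H → ∀ φ : G →* H, Continuous φ := by
  intro H _ _ _ _ hSIN φ
  refine continuous_of_continuousAt_one φ (Filter.tendsto_def.2 fun U hU => ?_)
  rw [map_one] at hU
  obtain ⟨N, hN, hNU⟩ := exists_mem_nhds_one_pow_subset k hU
  obtain ⟨M, hMo, hM1, hMN⟩ := exists_open_nhds_one_mul_subset hN
  obtain ⟨V, hV1, hVo, hVM, hVconj⟩ :=
    hSIN (M ∩ M⁻¹) (Filter.inter_mem (hMo.mem_nhds hM1) (inv_mem_nhds_one H (hMo.mem_nhds hM1)))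
  have hVN : V⁻¹ * V ⊆ N := (mul_subset_mul (inv_subset.2 (hVM.trans inter_subset_right))
    (hVM.trans inter_subset_left)).trans hMN
  have hVc : IsConjInvariant V := isConjInvariant_iff_conj_image_eq.2 hVconj
  have hW := hSt (φ ⁻¹' (V⁻¹ * V)) (inv_preimage_inv_mul_self φ V)
    (isConjInvariant_iff_conj_image_eq.1 ((hVc.inv.mul hVc).preimage φ))
    (exists_countable_mul_preimage_inv_mul_eq_univ φ hVo (mem_of_mem_nhds hV1))
  refine Filter.mem_of_superset (mem_interior_iff_mem_nhds.1 hW) ?_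
  exact (preimage_pow_subset φ _ k).trans
    (preimage_mono ((pow_subset_pow_left hVN).trans hNU))
end

section
/- Let G be a topological group. If every homomorphism from G to any Polish SIN group is continuous, then every homomorphism from G to any separable SIN group is continuous. -/
open Filter Set Topology UniformSpace
open scoped Pointwise

universe u

section SIN

variable {H : Type*} [Group H]

theorem image_conj_eq_of_forall_conj_mem {V : Set H} (hV : ∀ g, ∀ x ∈ V, g * x * g⁻¹ ∈ V)
    (g : H) : (fun x => g * x * g⁻¹) '' V = V := by
  refine (image_subset_iff.2 (hV g)).antisymm fun x hx => ⟨g⁻¹ * x * g, ?_, by group⟩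
  simpa using hV g⁻¹ x hx

variable [TopologicalSpace H]

theorem IsSIN.exists_forall_conj_mem (hsin : IsSIN H) {U : Set H} (hU : U ∈ 𝓝 1) :
    ∃ V ∈ 𝓝 (1 : H), V ⊆ U ∧ ∀ g, ∀ x ∈ V, g * x * g⁻¹ ∈ V := by
  obtain ⟨V, hV, -, hVU, hconj⟩ := hsin U hU
  exact ⟨V, hV, hVU, fun g x hx => hconj g ▸ mem_image_of_mem _ hx⟩

variable [IsTopologicalGroup H]

theorem IsSIN.of_forall_exists_conj_mem
    (h : ∀ U ∈ 𝓝 (1 : H), ∃ V ∈ 𝓝 (1 : H), V ⊆ U ∧ ∀ g, ∀ x ∈ V, g * x * g⁻¹ ∈ V) :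
    IsSIN H := by
  intro U hU
  obtain ⟨V, hV, hVU, hconj⟩ := h U hU
  refine ⟨interior V, interior_mem_nhds.2 hV, isOpen_interior, interior_subset.trans hVU,
    image_conj_eq_of_forall_conj_mem fun g => ?_⟩
  let c := (Homeomorph.mulLeft g).trans (Homeomorph.mulRight g⁻¹)
  show interior V ⊆ c ⁻¹' interior V
  rw [c.preimage_interior]
  exact interior_mono (hconj g)

theorem IsSIN.isUniformGroup (hsin : IsSIN H) :
    @IsUniformGroup H (IsTopologicalGroup.rightUniformSpace H) _ := by
  let := IsTopologicalGroup.rightUniformSpace H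
  have : IsRightUniformGroup H := { uniformity_eq := rfl }
  have hb : (𝓝 (1 : H)).HasBasis (fun V => V ∈ 𝓝 1 ∧ ∀ g, ∀ x ∈ V, g * x * g⁻¹ ∈ V) id :=
    ⟨fun U => ⟨fun hU => by
      obtain ⟨V, hV, hVU, hconj⟩ := hsin.exists_forall_conj_mem hU
      exact ⟨V, ⟨hV, hconj⟩, hVU⟩, fun ⟨V, ⟨hV, _⟩, hVU⟩ => mem_of_superset hV hVU⟩⟩
  have : IsLeftUniformGroup H := ⟨by
    rw [uniformity_eq_comap_nhds_one']
    refine (hb.comap _).eq_of_same_basis ((hb.comap _).congr (fun _ => Iff.rfl) ?_)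
    rintro V ⟨-, hconj⟩
    ext p
    exact ⟨fun h => by simpa [mul_assoc] using hconj p.1 _ h,
      fun h => by simpa [mul_assoc] using hconj p.1⁻¹ _ h⟩⟩
  exact .of_left_right

theorem IsSIN.of_isUniformGroup {K : Type*} [UniformSpace K] [Group K] [IsUniformGroup K] :
    IsSIN K := by
  refine .of_forall_exists_conj_mem fun U hU => ⟨{x | ∀ g, g * x * g⁻¹ ∈ U},
    eventually_forall_conj_nhds_one hU, fun x hx => by simpa using hx 1, fun g x hx h => ?_⟩
  simpa [mul_assoc] using hx (h * g)

end SIN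

instance Additive.isUniformAddGroup {α : Type*} [UniformSpace α] [Group α] [IsUniformGroup α] :
    IsUniformAddGroup (Additive α) :=
  ⟨uniformContinuous_div (α := α)⟩

instance Multiplicative.isUniformGroup {α : Type*} [UniformSpace α] [AddGroup α]
    [IsUniformAddGroup α] : IsUniformGroup (Multiplicative α) :=
  ⟨uniformContinuous_sub (α := α)⟩

namespace UniformSpace.Completion

open Uniformity

variable {A : Type*} [UniformSpace A] [AddGroup A] [IsUniformAddGroup A]
  [(𝓝 (0 : A)).IsCountablyGenerated]

theorem isCountablyGenerated_uniformity : (𝓤 (Completion A)).IsCountablyGenerated := by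
  obtain ⟨s, hs⟩ := (𝓝 (0 : A)).exists_antitone_basis
  have hb := hs.toHasBasis.hasBasis_of_isDenseInducing isDenseInducing_coe
  rw [coe_zero] at hb
  have := hb.isCountablyGenerated
  exact IsUniformAddGroup.uniformity_countably_generated

theorem polishSpace [TopologicalSpace.SeparableSpace A] : PolishSpace (Completion A) :=
  have := isCountablyGenerated_uniformity (A := A)
  inferInstance

end UniformSpace.Completion

def ContainsPolishSINPreimage {H : Type u} [Group H] (U : Set H) : Prop :=
  ∃ (K : Type u) (_ : Group K) (_ : TopologicalSpace K) (_ : IsTopologicalGroup K)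
    (_ : PolishSpace K), IsSIN K ∧ ∃ ψ : H →* K, ∃ W ∈ 𝓝 (1 : K), ψ ⁻¹' W ⊆ U

theorem ContainsPolishSINPreimage.of_comp {H H' : Type u} [Group H] [Group H'] {U : Set H}
    {U' : Set H'} (hU' : ContainsPolishSINPreimage U') (ψ : H →* H') (hψ : ψ ⁻¹' U' ⊆ U) :
    ContainsPolishSINPreimage U := by
  obtain ⟨K, _, _, _, _, hK, ψ', W, hW, hψ'⟩ := hU'
  exact ⟨K, inferInstance, inferInstance, inferInstance, inferInstance, hK, ψ'.comp ψ, W, hW,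
    (preimage_mono hψ').trans hψ⟩

theorem ContainsPolishSINPreimage.preimage_mem_nhds {G H : Type u} [Group G]
    [TopologicalSpace G] [Group H]
    (h : ∀ (K : Type u) [Group K] [TopologicalSpace K] [IsTopologicalGroup K] [PolishSpace K],
      IsSIN K → ∀ φ : G →* K, Continuous φ)
    (φ : G →* H) {U : Set H} (hU : ContainsPolishSINPreimage U) : φ ⁻¹' U ∈ 𝓝 (1 : G) := by
  obtain ⟨K, _, _, _, _, hK, ψ, W, hW, hψ⟩ := hU
  refine mem_of_superset ((h K hK (ψ.comp φ)).continuousAt.preimage_mem_nhds ?_)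
    (preimage_mono hψ)
  rwa [map_one]

theorem IsSIN.containsPolishSINPreimage_of_isCountablyGenerated {H : Type u} [Group H]
    [TopologicalSpace H] [IsTopologicalGroup H] [TopologicalSpace.SeparableSpace H]
    [(𝓝 (1 : H)).IsCountablyGenerated] (hsin : IsSIN H) {U : Set H} (hU : U ∈ 𝓝 1) :
    ContainsPolishSINPreimage U := by
  -- Group completions exist only for additive groups, hence the detour through `Additive`.
  let := IsTopologicalGroup.rightUniformSpace H
  have := hsin.isUniformGroup
  have : (𝓝 (0 : Additive H)).IsCountablyGenerated := ‹(𝓝 (1 : H)).IsCountablyGenerated›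
  have : TopologicalSpace.SeparableSpace (Additive H) := ‹TopologicalSpace.SeparableSpace H›
  have := Completion.polishSpace (A := Additive H)
  have hU' : U ∈ 𝓝 (0 : Additive H) := hU
  rw [Completion.isDenseInducing_coe.nhds_eq_comap, Completion.coe_zero] at hU'
  obtain ⟨W, hW, hWU⟩ := mem_comap.1 hU'
  exact ⟨Multiplicative (Completion (Additive H)), inferInstance, inferInstance, inferInstance,
    inferInstanceAs (PolishSpace (Completion (Additive H))), .of_isUniformGroup,
    (Completion.toCompl (α := Additive H)).toMultiplicative, W, hW, hWU⟩

section FilterBasis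

variable {H : Type*} [Group H] [TopologicalSpace H] [IsTopologicalGroup H]

theorem IsSIN.exists_conj_mem_mul_subset (hsin : IsSIN H) {W : Set H} (hW : W ∈ 𝓝 1) :
    ∃ S ∈ 𝓝 (1 : H), S * S ⊆ W ∧ S⁻¹ ⊆ W ∧ ∀ g, ∀ x ∈ S, g * x * g⁻¹ ∈ S := by
  obtain ⟨V, hV, -, hVinv, hVW⟩ := exists_closed_nhds_one_inv_eq_mul_subset hW
  obtain ⟨S, hS, hSV, hconj⟩ := hsin.exists_forall_conj_mem hV
  have hVW' : V ⊆ W := (subset_mul_left V (mem_of_mem_nhds hV)).trans hVW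
  exact ⟨S, hS, (mul_subset_mul hSV hSV).trans hVW,
    (inv_subset_inv.2 hSV).trans (hVinv.trans_subset hVW'), hconj⟩

theorem IsSIN.exists_conj_invariant_nhds_seq (hsin : IsSIN H) {U : Set H} (hU : U ∈ 𝓝 1) :
    ∃ B : ℕ → Set H, (∀ n, B n ∈ 𝓝 1) ∧ (∀ n, B (n + 1) * B (n + 1) ⊆ B n) ∧
      (∀ n, (B (n + 1))⁻¹ ⊆ B n) ∧ (∀ n g, ∀ x ∈ B n, g * x * g⁻¹ ∈ B n) ∧ B 0 ⊆ U := by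
  have step : ∀ W : {W : Set H // W ∈ 𝓝 1}, ∃ S : {S : Set H // S ∈ 𝓝 1},
      S.1 * S.1 ⊆ W ∧ S.1⁻¹ ⊆ W ∧ ∀ g, ∀ x ∈ S.1, g * x * g⁻¹ ∈ S.1 := fun W => by
    obtain ⟨S, hS, h⟩ := hsin.exists_conj_mem_mul_subset W.2
    exact ⟨⟨S, hS⟩, h⟩
  choose f hf using step
  refine ⟨fun n => (f^[n + 1] ⟨U, hU⟩).1, fun n => (f^[n + 1] _).2, fun n => ?_, fun n => ?_,
    fun n => ?_, ?_⟩
  · simpa only [Function.iterate_succ_apply'] using (hf _).1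
  · simpa only [Function.iterate_succ_apply'] using (hf _).2.1
  · simpa only [Function.iterate_succ_apply'] using (hf _).2.2
  · exact (subset_mul_left _ (mem_of_mem_nhds (f _).2)).trans (hf _).1

theorem IsSIN.exists_groupFilterBasis (hsin : IsSIN H) {U : Set H} (hU : U ∈ 𝓝 1) :
    ∃ F : GroupFilterBasis H, F.sets.Countable ∧
      ∀ V ∈ F, V ∈ 𝓝 1 ∧ V ⊆ U ∧ ∀ g, ∀ x ∈ V, g * x * g⁻¹ ∈ V := by
  obtain ⟨B, hB, hmul, hinv, hconj, hBU⟩ := hsin.exists_conj_invariant_nhds_seq hU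
  have hanti : Antitone B := antitone_nat_of_succ_le fun n =>
    (subset_mul_left _ (mem_of_mem_nhds (hB _))).trans (hmul n)
  let F : GroupFilterBasis H :=
    { sets := range B
      nonempty := range_nonempty B
      inter_sets := by
        rintro _ _ ⟨m, rfl⟩ ⟨n, rfl⟩
        exact ⟨B (max m n), mem_range_self _, subset_inter (hanti (le_max_left m n))
          (hanti (le_max_right m n))⟩
      one' := by
        rintro _ ⟨n, rfl⟩
        exact mem_of_mem_nhds (hB n)
      mul' := by
        rintro _ ⟨n, rfl⟩
        exact ⟨B (n + 1), mem_range_self _, hmul n⟩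
      inv' := by
        rintro _ ⟨n, rfl⟩
        exact ⟨B (n + 1), mem_range_self _, fun x hx => hinv n (inv_mem_inv.2 hx)⟩
      conj' := by
        rintro g _ ⟨n, rfl⟩
        exact ⟨B n, mem_range_self _, hconj n g⟩ }
  refine ⟨F, countable_range B, ?_⟩
  rintro _ ⟨n, rfl⟩
  exact ⟨hB n, (hanti n.zero_le).trans hBU, hconj n⟩

end FilterBasis

def WithGroupFilterBasis {H : Type*} [Group H] (_F : GroupFilterBasis H) : Type _ := H

namespace WithGroupFilterBasis

variable {H : Type*} [Group H] (F : GroupFilterBasis H)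

instance : Group (WithGroupFilterBasis F) := ‹Group H›

instance : TopologicalSpace (WithGroupFilterBasis F) := F.topology

instance : IsTopologicalGroup (WithGroupFilterBasis F) := F.isTopologicalGroup

def ofGroup : H →* WithGroupFilterBasis F := MonoidHom.id H

theorem nhds_one_hasBasis : (𝓝 (1 : WithGroupFilterBasis F)).HasBasis (· ∈ F) id :=
  F.nhds_one_hasBasis

theorem isCountablyGenerated_nhds_one (hF : F.sets.Countable) :
    (𝓝 (1 : WithGroupFilterBasis F)).IsCountablyGenerated :=
  ⟨⟨F.sets, hF, F.nhds_one_eq.trans F.generate.symm⟩⟩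

theorem isSIN (hF : ∀ V ∈ F, ∀ g, ∀ x ∈ V, g * x * g⁻¹ ∈ V) : IsSIN (WithGroupFilterBasis F) :=
  .of_forall_exists_conj_mem fun _ hU =>
    let ⟨V, hV, hVU⟩ := (nhds_one_hasBasis F).mem_iff.1 hU
    ⟨V, (nhds_one_hasBasis F).mem_of_mem hV, hVU, hF V hV⟩

theorem continuous_ofGroup [TopologicalSpace H] [IsTopologicalGroup H]
    (hF : ∀ V ∈ F, V ∈ 𝓝 (1 : H)) : Continuous (ofGroup F) :=
  continuous_of_continuousAt_one _ <| (nhds_one_hasBasis F).tendsto_right_iff.2 hF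

theorem separableSpace [TopologicalSpace H] [IsTopologicalGroup H]
    [TopologicalSpace.SeparableSpace H] (hF : ∀ V ∈ F, V ∈ 𝓝 (1 : H)) :
    TopologicalSpace.SeparableSpace (WithGroupFilterBasis F) :=
  Function.Surjective.denseRange (f := ofGroup F) (fun x => ⟨x, rfl⟩) |>.separableSpace
    (continuous_ofGroup F hF)

end WithGroupFilterBasis

theorem IsSIN.containsPolishSINPreimage {H : Type u} [Group H] [TopologicalSpace H]
    [IsTopologicalGroup H] [TopologicalSpace.SeparableSpace H] (hsin : IsSIN H) {U : Set H}
    (hU : U ∈ 𝓝 1) : ContainsPolishSINPreimage U := by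
  obtain ⟨F, hFc, hF⟩ := hsin.exists_groupFilterBasis hU
  have := WithGroupFilterBasis.isCountablyGenerated_nhds_one F hFc
  have := WithGroupFilterBasis.separableSpace F fun V hV => (hF V hV).1
  obtain ⟨V, hV⟩ := F.nonempty
  have hsin' := WithGroupFilterBasis.isSIN F fun V hV => (hF V hV).2.2
  exact (hsin'.containsPolishSINPreimage_of_isCountablyGenerated
    ((WithGroupFilterBasis.nhds_one_hasBasis F).mem_of_mem hV)).of_comp
    (WithGroupFilterBasis.ofGroup F) (hF V hV).2.1

theorem polish_SIN_continuity_implies_separable_SIN_continuity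
    {G : Type u} [Group G] [TopologicalSpace G] [IsTopologicalGroup G]
    (h : ∀ (H : Type u) [Group H] [TopologicalSpace H] [IsTopologicalGroup H] [PolishSpace H],
      IsSIN H → ∀ φ : G →* H, Continuous φ) :
    ∀ (H : Type u) [Group H] [TopologicalSpace H] [IsTopologicalGroup H]
      [TopologicalSpace.SeparableSpace H], IsSIN H → ∀ φ : G →* H, Continuous φ := by
  intro H _ _ _ _ hsin φ
  refine continuous_of_continuousAt_one φ fun U hU => ?_
  rw [map_one] at hU
  exact (hsin.containsPolishSINPreimage hU).preimage_mem_nhds h φ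
end
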